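/- The lattice Γ_16 (generated by L_16 = {z ∈ ℤ^{16} : Σ z_i even} and the all-halves vector in ℝ^{16}) contains exactly 480 vectors w with |w|² = 2, and all of them lie in ℤ^{16}; they are exactly the vectors ±e_i ± e_j with i < j. -/
import Mathlib
set_option maxRecDepth 10000

/-- `L_n`: integer vectors with even coordinate sum. -/
def Lset (n : ℕ) : Set (Fin n → ℝ) :=
  {z | (∀ i, ∃ k : ℤ, z i = k) ∧ ∃ k : ℤ, (∑ i, z i) = 2 * k}

/-- `Γ_n`: subgroup of `ℝ^n` generated by `L_n` and the all-halves vector. -/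
def Gam (n : ℕ) : AddSubgroup (Fin n → ℝ) :=
  AddSubgroup.closure (Lset n ∪ {fun _ => (1 : ℝ) / 2})

open Finset

namespace Stmt14Aux

/-- integer-or-half-integer vectors form a subgroup -/
def H : AddSubgroup (Fin 16 → ℝ) where
  carrier := {w | (∀ i, ∃ k : ℤ, w i = k) ∨ (∀ i, ∃ k : ℤ, w i = k + 1/2)}
  zero_mem' := Or.inl fun i => ⟨0, by simp⟩
  add_mem' := by
    rintro a b (ha | ha) (hb | hb)
    · refine Or.inl fun i => ?_
      obtain ⟨k, hk⟩ := ha i; obtain ⟨m, hm⟩ := hb i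
      exact ⟨k + m, by simp [Pi.add_apply, hk, hm]⟩
    · refine Or.inr fun i => ?_
      obtain ⟨k, hk⟩ := ha i; obtain ⟨m, hm⟩ := hb i
      exact ⟨k + m, by push_cast [Pi.add_apply, hk, hm]; ring⟩
    · refine Or.inr fun i => ?_
      obtain ⟨k, hk⟩ := ha i; obtain ⟨m, hm⟩ := hb i
      exact ⟨k + m, by push_cast [Pi.add_apply, hk, hm]; ring⟩
    · refine Or.inl fun i => ?_
      obtain ⟨k, hk⟩ := ha i; obtain ⟨m, hm⟩ := hb i
      exact ⟨k + m + 1, by push_cast [Pi.add_apply, hk, hm]; ring⟩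
  neg_mem' := by
    rintro a (ha | ha)
    · refine Or.inl fun i => ?_
      obtain ⟨k, hk⟩ := ha i
      exact ⟨-k, by push_cast [Pi.neg_apply, hk]; ring⟩
    · refine Or.inr fun i => ?_
      obtain ⟨k, hk⟩ := ha i
      exact ⟨-k - 1, by push_cast [Pi.neg_apply, hk]; ring⟩

lemma gam_le_H : Gam 16 ≤ H := by
  rw [Gam, AddSubgroup.closure_le]
  rintro w (hw | hw)
  · exact Or.inl hw.1
  · rcases hw with rfl
    exact Or.inr fun i => ⟨0, by norm_num⟩

/-- norm-2 vectors of Γ₁₆ have integer coordinates -/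
lemma gam_int (w : Fin 16 → ℝ) (hw : w ∈ Gam 16) (h2 : (∑ i, w i * w i) = 2) :
    ∀ i, ∃ k : ℤ, w i = k := by
  rcases gam_le_H hw with h | h
  · exact h
  · exfalso
    have hq : ∀ i : Fin 16, (1:ℝ)/4 ≤ w i * w i := by
      intro i
      obtain ⟨k, hk⟩ := h i
      have hkk : (0:ℤ) ≤ k * (k + 1) := by nlinarith [sq_nonneg (2*k+1)]
      have hkk' : (0:ℝ) ≤ (k:ℝ) * ((k:ℝ) + 1) := by exact_mod_cast hkk
      rw [hk]; nlinarith
    have := Finset.sum_le_sum (fun i (_ : i ∈ Finset.univ) => hq i)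
    rw [h2] at this
    simp at this
    norm_num at this

def sg (b : Bool) : ℝ := if b then 1 else -1

lemma sg_ne (b : Bool) : sg b ≠ 0 := by cases b <;> norm_num [sg]

def f (p : (Fin 16 × Fin 16) × Bool × Bool) : Fin 16 → ℝ :=
  sg p.2.1 • (Pi.single p.1.1 1 : Fin 16 → ℝ) + sg p.2.2 • (Pi.single p.1.2 1 : Fin 16 → ℝ)

lemma f_apply (i j : Fin 16) (s t : Bool) (l : Fin 16) :
    f ((i,j),(s,t)) l = (if l = i then sg s else 0) + (if l = j then sg t else 0) := by
  simp [f, Pi.single_apply, mul_ite]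

def T : Finset ((Fin 16 × Fin 16) × Bool × Bool) :=
  Finset.univ.filter (fun p => p.1.1 < p.1.2)

set_option maxRecDepth 10000 in
lemma T_card : T.card = 480 := by decide

lemma f_injOn : Set.InjOn f T := by
  rintro ⟨⟨i, j⟩, s, t⟩ hp ⟨⟨i', j'⟩, s', t'⟩ hq h
  simp only [T, mem_coe, mem_filter, mem_univ, true_and] at hp hq
  have hij : i ≠ j := ne_of_lt hp
  have hij' : i' ≠ j' := ne_of_lt hq
  have key : ∀ l, (if l = i then sg s else 0) + (if l = j then sg t else 0)
      = (if l = i' then sg s' else 0) + (if l = j' then sg t' else 0) := by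
    intro l; rw [← f_apply, ← f_apply, h]
  -- i' ∈ {i, j}
  have hi' : i' = i ∨ i' = j := by
    by_contra hc
    push_neg at hc
    have := key i'
    simp [hc.1, hc.2, hij', sg_ne] at this
    exact sg_ne s' this.symm
  have hj' : j' = i ∨ j' = j := by
    by_contra hc
    push_neg at hc
    have := key j'
    simp [hc.1, hc.2, hij'.symm, sg_ne] at this
    exact sg_ne t' this.symm
  have hii : i' = i ∧ j' = j := by
    rcases hi' with h1 | h1
    · rcases hj' with h2 | h2
      · exfalso; rw [h1, h2] at hq; exact lt_irrefl _ hq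
      · exact ⟨h1, h2⟩
    · exfalso
      rcases hj' with h2 | h2
      · rw [h1, h2] at hq; exact lt_irrefl _ (hp.trans hq)
      · rw [h1, h2] at hq; exact lt_irrefl _ hq
  have hs : sg s = sg s' := by
    simpa [hij, hii.1, hii.2] using key i
  have ht : sg t = sg t' := by
    simpa [hij, Ne.symm hij, hii.1, hii.2] using key j
  have hs' : s = s' := by
    cases s <;> cases s' <;>
      first
      | rfl
      | exact absurd hs (by norm_num [sg])
  have ht' : t = t' := by
    cases t <;> cases t' <;>
      first
      | rfl
      | exact absurd ht (by norm_num [sg])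
  simp [Prod.ext_iff, hii.1, hii.2, hs', ht']

/-- backward: such vectors are in Γ and have norm 2 -/
lemma backward (i j : Fin 16) (hij : i < j) (a b : ℝ) (ha : a = 1 ∨ a = -1)
    (hb : b = 1 ∨ b = -1) (w : Fin 16 → ℝ)
    (hw : w = a • (Pi.single i 1 : Fin 16 → ℝ) + b • (Pi.single j 1 : Fin 16 → ℝ)) :
    w ∈ Gam 16 ∧ (∑ l, w l * w l) = 2 := by
  have hij' : i ≠ j := ne_of_lt hij
  have hwl : ∀ l, w l = (if l = i then a else 0) + (if l = j then b else 0) := by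
    intro l; rw [hw]; simp [Pi.single_apply, mul_ite]
  obtain ⟨ma, hma⟩ : ∃ m : ℤ, a = m := by
    rcases ha with rfl | rfl
    exacts [⟨1, by norm_num⟩, ⟨-1, by norm_num⟩]
  obtain ⟨mb, hmb⟩ : ∃ m : ℤ, b = m := by
    rcases hb with rfl | rfl
    exacts [⟨1, by norm_num⟩, ⟨-1, by norm_num⟩]
  constructor
  · apply AddSubgroup.subset_closure
    left
    constructor
    · intro l
      rw [hwl l]
      refine ⟨(if l = i then ma else 0) + (if l = j then mb else 0), ?_⟩
      by_cases h1 : l = i <;> by_cases h2 : l = j <;> push_cast <;> simp [h1, h2, hma, hmb]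
    · have hsum : (∑ l, w l) = a + b := by
        simp only [hwl]
        rw [Finset.sum_add_distrib]
        simp [Finset.sum_ite_eq']
      rcases ha with rfl | rfl <;> rcases hb with rfl | rfl
      · exact ⟨1, by rw [hsum]; norm_num⟩
      · exact ⟨0, by rw [hsum]; norm_num⟩
      · exact ⟨0, by rw [hsum]; norm_num⟩
      · exact ⟨-1, by rw [hsum]; norm_num⟩
  · have hterm : ∀ l, w l * w l = (if l = i then 1 else 0) + (if l = j then 1 else 0) := by
      intro l
      rw [hwl l]
      by_cases h1 : l = i
      · subst h1
        simp [hij']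
        rcases ha with rfl | rfl <;> norm_num
      · by_cases h2 : l = j
        · subst h2
          simp [h1]
          rcases hb with rfl | rfl <;> norm_num
        · simp [h1, h2]
    simp only [hterm]
    rw [Finset.sum_add_distrib]
    simp [Finset.sum_ite_eq']
    norm_num

/-- forward: norm-2 vectors of Γ have the stated form -/
lemma forward (w : Fin 16 → ℝ) (hw : w ∈ Gam 16) (h2 : (∑ i, w i * w i) = 2) :
    ∃ i j : Fin 16, i < j ∧ ∃ a b : ℝ, (a = 1 ∨ a = -1) ∧ (b = 1 ∨ b = -1) ∧
      w = a • (Pi.single i 1 : Fin 16 → ℝ) + b • (Pi.single j 1 : Fin 16 → ℝ) := by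
  obtain ⟨k, hk⟩ : ∃ k : Fin 16 → ℤ, ∀ i, w i = k i := by
    choose k hk using gam_int w hw h2
    exact ⟨k, hk⟩
  have hsum : (∑ i, k i ^ 2) = 2 := by
    have : ((∑ i, k i ^ 2 : ℤ) : ℝ) = 2 := by
      push_cast
      rw [← h2]
      exact Finset.sum_congr rfl fun i _ => by rw [hk i]; ring
    exact_mod_cast this
  have hle : ∀ i, k i ^ 2 ≤ 2 := by
    intro i
    calc k i ^ 2 ≤ ∑ l, k l ^ 2 :=
          Finset.single_le_sum (fun l _ => sq_nonneg (k l)) (mem_univ i)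
      _ = 2 := hsum
  have hone : ∀ i, k i ≠ 0 → k i ^ 2 = 1 := by
    intro i hne
    have h1 : k i ≤ 1 := by nlinarith [hle i]
    have h2' : -1 ≤ k i := by nlinarith [hle i]
    rcases (by omega : k i = 1 ∨ k i = -1) with h | h <;> rw [h] <;> ring
  set S := Finset.univ.filter (fun i => k i ≠ 0) with hS
  have hcard : S.card = 2 := by
    have h1 : (∑ i, k i ^ 2) = ∑ i ∈ S, k i ^ 2 := by
      rw [eq_comm]
      apply Finset.sum_subset (Finset.filter_subset _ _)
      intro x _ hx
      simp [hS] at hx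
      simp [hx]
    have h2'' : (∑ i ∈ S, k i ^ 2) = ∑ i ∈ S, 1 := by
      apply Finset.sum_congr rfl
      intro x hx
      simp [hS] at hx
      exact hone x hx
    have : (S.card : ℤ) = 2 := by
      rw [← hsum, h1, h2'']; simp
    exact_mod_cast this
  obtain ⟨i, j, hij0, hSij⟩ := Finset.card_eq_two.mp hcard
  have hmem : ∀ l, k l ≠ 0 ↔ (l = i ∨ l = j) := by
    intro l
    constructor
    · intro hl
      have : l ∈ S := by simp [hS, hl]
      rw [hSij] at this; simpa using this
    · rintro (rfl | rfl)
      · have : l ∈ S := by rw [hSij]; simp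
        simpa [hS] using this
      · have : l ∈ S := by rw [hSij]; simp
        simpa [hS] using this
  have hki : k i = 1 ∨ k i = -1 := by
    have h0 := hone i ((hmem i).mpr (Or.inl rfl))
    have h1 : k i ≤ 1 := by nlinarith
    have h2' : -1 ≤ k i := by nlinarith
    have h3 : k i ≠ 0 := (hmem i).mpr (Or.inl rfl)
    omega
  have hkj : k j = 1 ∨ k j = -1 := by
    have h0 := hone j ((hmem j).mpr (Or.inr rfl))
    have h1 : k j ≤ 1 := by nlinarith
    have h2' : -1 ≤ k j := by nlinarith
    have h3 : k j ≠ 0 := (hmem j).mpr (Or.inr rfl)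
    omega
  -- order i and j
  have hw_eq : ∀ (i' j' : Fin 16), i' ≠ j' → ({i', j'} : Finset (Fin 16)) = S →
      w = (k i' : ℝ) • (Pi.single i' 1 : Fin 16 → ℝ) + (k j' : ℝ) • (Pi.single j' 1 : Fin 16 → ℝ) := by
    intro i' j' hne hset
    funext l
    have hmem' : ∀ m, k m ≠ 0 ↔ (m = i' ∨ m = j') := by
      intro m
      rw [show (m = i' ∨ m = j') ↔ m ∈ ({i', j'} : Finset (Fin 16)) by simp, hset]
      simp [hS]
    simp only [Pi.add_apply, Pi.smul_apply, Pi.single_apply, smul_eq_mul, mul_ite, mul_one, mul_zero]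
    by_cases h1 : l = i'
    · subst h1
      simp [hne, hk]
    · by_cases h2 : l = j'
      · subst h2
        simp [h1, hk]
      · have : k l = 0 := by
          by_contra hc
          rcases (hmem' l).mp hc with h | h <;> simp_all
        simp [h1, h2, hk, this]
  rcases lt_or_gt_of_ne hij0 with hlt | hgt
  · refine ⟨i, j, hlt, (k i : ℝ), (k j : ℝ), ?_, ?_, ?_⟩
    · rcases hki with h | h <;> [left; right] <;> rw [h] <;> norm_num
    · rcases hkj with h | h <;> [left; right] <;> rw [h] <;> norm_num
    · exact hw_eq i j (ne_of_lt hlt) hSij.symm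
  · refine ⟨j, i, hgt, (k j : ℝ), (k i : ℝ), ?_, ?_, ?_⟩
    · rcases hkj with h | h <;> [left; right] <;> rw [h] <;> norm_num
    · rcases hki with h | h <;> [left; right] <;> rw [h] <;> norm_num
    · refine hw_eq j i (ne_of_gt hgt).symm ?_
      rw [hSij]; exact Finset.pair_comm j i
  
lemma setEq : {w : Fin 16 → ℝ | w ∈ Gam 16 ∧ (∑ i, w i * w i) = 2} =
      {w | ∃ i j : Fin 16, i < j ∧ ∃ a b : ℝ, (a = 1 ∨ a = -1) ∧ (b = 1 ∨ b = -1) ∧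
        w = a • (Pi.single i 1 : Fin 16 → ℝ) + b • (Pi.single j 1 : Fin 16 → ℝ)} := by
  ext w
  constructor
  · rintro ⟨hw, h2⟩
    exact forward w hw h2
  · rintro ⟨i, j, hij, a, b, ha, hb, rfl⟩
    exact backward i j hij a b ha hb _ rfl

lemma setEq2 : {w : Fin 16 → ℝ | ∃ i j : Fin 16, i < j ∧ ∃ a b : ℝ, (a = 1 ∨ a = -1) ∧ (b = 1 ∨ b = -1) ∧
        w = a • (Pi.single i 1 : Fin 16 → ℝ) + b • (Pi.single j 1 : Fin 16 → ℝ)}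
      = ↑(T.image f) := by
  ext w
  simp only [Set.mem_setOf_eq, coe_image, Set.mem_image, mem_coe]
  constructor
  · rintro ⟨i, j, hij, a, b, ha, hb, rfl⟩
    have hT : ∀ s t : Bool, ((i, j), (s, t)) ∈ T := by
      intro s t; simp [T, hij]
    rcases ha with rfl | rfl <;> rcases hb with rfl | rfl
    · exact ⟨((i, j), (true, true)), hT _ _, by simp [f, sg]⟩
    · exact ⟨((i, j), (true, false)), hT _ _, by simp [f, sg]⟩
    · exact ⟨((i, j), (false, true)), hT _ _, by simp [f, sg]⟩
    · exact ⟨((i, j), (false, false)), hT _ _, by simp [f, sg]⟩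
  · rintro ⟨⟨⟨i, j⟩, s, t⟩, hp, rfl⟩
    simp only [T, mem_filter, mem_univ, true_and] at hp
    exact ⟨i, j, hp, sg s, sg t, by cases s <;> simp [sg], by cases t <;> simp [sg], rfl⟩

end Stmt14Aux

/-- `Γ_16` contains exactly 480 vectors of squared norm 2; they all have
integer coordinates, and they are exactly the vectors `±eᵢ ± eⱼ` with `i < j`. -/
theorem stmt14 :
    {w : Fin 16 → ℝ | w ∈ Gam 16 ∧ (∑ i, w i * w i) = 2}.ncard = 480 ∧
    (∀ w : Fin 16 → ℝ, w ∈ Gam 16 → (∑ i, w i * w i) = 2 → ∀ i, ∃ k : ℤ, w i = k) ∧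
    {w : Fin 16 → ℝ | w ∈ Gam 16 ∧ (∑ i, w i * w i) = 2} =
      {w | ∃ i j : Fin 16, i < j ∧ ∃ a b : ℝ, (a = 1 ∨ a = -1) ∧ (b = 1 ∨ b = -1) ∧
        w = a • (Pi.single i 1 : Fin 16 → ℝ) + b • (Pi.single j 1 : Fin 16 → ℝ)} := by
  refine ⟨?_, fun w hw h2 => Stmt14Aux.gam_int w hw h2, Stmt14Aux.setEq⟩
  rw [Stmt14Aux.setEq, Stmt14Aux.setEq2, Set.ncard_coe_finset,
    Finset.card_image_of_injOn Stmt14Aux.f_injOn, Stmt14Aux.T_card]
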